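/- arXiv:1309.3663 — 3 statements merged into one kernel-verified Lean document; each statement's English description precedes it below -/
import Mathlib

section
/- Let {X_t} be a stationary Markov chain on a finite set A = {1,...,n} with doublet frequency vector μ ∈ M_s(A²) satisfying μ_{ij} > 0 for all i, j. Define c̲ = 2 log(min_i μ̄_i) − log(max_{i,j} μ_{ij}) and c̄ = 2 log(max_i μ̄_i) − log(min_{i,j} μ_{ij}). Then for every l ≥ 1 and every sample path x_1^l ∈ A^l, writing ν = ν(x_1^l) for the cyclic empirical doublet measure and ν̄ for its marginal, one has −l[J(ν,μ) − J(ν̄,μ̄)] + c̲ ≤ log Pr{X_1^l = x_1^l} ≤ −l[J(ν,μ) − J(ν̄,μ̄)] + c̄, where J(ν,μ) = Σ_{i,j} ν_{ij} log(1/μ_{ij}) and J(ν̄,μ̄) = Σ_i ν̄_i log(1/μ̄_i). -/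
open Finset

/-- Marginal of a doublet distribution. -/
def marg {n : ℕ} (ν : Fin n → Fin n → ℝ) : Fin n → ℝ := fun i => ∑ j, ν i j

def IsProb2 {n : ℕ} (ν : Fin n → Fin n → ℝ) : Prop :=
  (∀ i j, 0 ≤ ν i j) ∧ ∑ i, ∑ j, ν i j = 1

def IsStat2 {n : ℕ} (ν : Fin n → Fin n → ℝ) : Prop :=
  ∀ i, ∑ j, ν i j = ∑ j, ν j i

/-- Cyclic empirical doublet measure of a sample path of length `l = m+1`,
with the convention `x_{l+1} := x_1`. -/
noncomputable def emp2 {n m : ℕ} (x : Fin (m+1) → Fin n) : Fin n → Fin n → ℝ :=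
  fun i j => (∑ t : Fin (m+1), if x t = i ∧ x (t+1) = j then (1:ℝ) else 0) / (m+1)

/-- Law of the stationary Markov chain with doublet distribution `μ` on paths of
length `l = m+1`:  `Pr{X_1^l = x} = μ̄(x_1) ∏_{t=1}^{l-1} μ(x_t x_{t+1})/μ̄(x_t)`. -/
noncomputable def pathP {n : ℕ} (μ : Fin n → Fin n → ℝ) {m : ℕ} (x : Fin (m+1) → Fin n) : ℝ :=
  marg μ (x 0) * ∏ t : Fin m, (μ (x t.castSucc) (x t.succ) / marg μ (x t.castSucc))

/-- The loss function `J(ν,μ) = Σ_{ij} ν_{ij} log(1/μ_{ij})`. -/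
noncomputable def J2 {n : ℕ} (ν μ : Fin n → Fin n → ℝ) : ℝ :=
  ∑ i, ∑ j, ν i j * Real.log (1 / μ i j)

/-- The loss function `J(ν̄,μ̄) = Σ_i ν̄_i log(1/μ̄_i)`. -/
noncomputable def J1 {n : ℕ} (p q : Fin n → ℝ) : ℝ := ∑ i, p i * Real.log (1 / q i)

/-!
Taking logarithms, `log Pr{X_1^l = x_1^l}` is `log μ̄(x_1)` plus the sum over the `l - 1`
transitions of `log μ(x_t x_{t+1}) - log μ̄(x_t)`. Adding the wrap-around transition `x_l → x_1`
turns this into a cyclic sum, which is `l` times an average against the cyclic empirical measure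
`ν`, namely `-l [J(ν,μ) - J(ν̄,μ̄)]`. Hence
`log Pr{X_1^l = x_1^l} = -l [J(ν,μ) - J(ν̄,μ̄)] + log μ̄(x_1) + log μ̄(x_l) - log μ(x_l x_1)`,
and the three boundary terms are bounded by the extreme values of `μ̄` and `μ`.
-/
lemma marg_pos {n : ℕ} {μ : Fin n → Fin n → ℝ} (hpos : ∀ i j, 0 < μ i j) (i : Fin n) :
    0 < marg μ i :=
  sum_pos (fun j _ => hpos i j) ⟨i, mem_univ i⟩

lemma J1_marg {n : ℕ} (ν : Fin n → Fin n → ℝ) (q : Fin n → ℝ) :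
    J1 (marg ν) q = J2 ν fun i _ => q i := by
  simp only [J1, J2, marg, sum_mul]

lemma Fin.sum_cyclic_pairs {α M : Type*} [AddCommMonoid M] {m : ℕ} (x : Fin (m+1) → α)
    (f : α → α → M) :
    ∑ t : Fin (m+1), f (x t) (x (t+1))
      = ∑ t : Fin m, f (x t.castSucc) (x t.succ) + f (x (Fin.last m)) (x 0) := by
  simp [Fin.sum_univ_castSucc, Fin.coeSucc_eq_succ, Fin.last_add_one]

lemma mul_sum_emp2_mul {n m : ℕ} (x : Fin (m+1) → Fin n) (f : Fin n → Fin n → ℝ) :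
    ((m:ℝ)+1) * ∑ i, ∑ j, emp2 x i j * f i j = ∑ t, f (x t) (x (t+1)) := by
  have hterm : ∀ i j, ((m:ℝ)+1) * (emp2 x i j * f i j)
      = ∑ t, if x t = i ∧ x (t+1) = j then f i j else 0 := by
    intro i j
    rw [emp2, ← mul_assoc, mul_div_cancel₀ _ (by positivity), sum_mul]
    simp only [ite_mul, one_mul, zero_mul]
  simp_rw [mul_sum, hterm]
  rw [Finset.sum_congr rfl fun i _ => Finset.sum_comm, Finset.sum_comm]
  simp [ite_and]

lemma mul_J2_emp2 {n m : ℕ} (x : Fin (m+1) → Fin n) (μ : Fin n → Fin n → ℝ) :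
    ((m:ℝ)+1) * J2 (emp2 x) μ = -∑ t, Real.log (μ (x t) (x (t+1))) := by
  simp only [J2, mul_sum_emp2_mul, one_div, Real.log_inv, sum_neg_distrib]

lemma log_pathP {n m : ℕ} {μ : Fin n → Fin n → ℝ} (hpos : ∀ i j, 0 < μ i j)
    (x : Fin (m+1) → Fin n) :
    Real.log (pathP μ x) = Real.log (marg μ (x 0)) +
      ∑ t : Fin m, (Real.log (μ (x t.castSucc) (x t.succ)) - Real.log (marg μ (x t.castSucc))) := by
  have htrans : ∀ i j, 0 < μ i j / marg μ i := fun i j => div_pos (hpos i j) (marg_pos hpos i)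
  rw [pathP, Real.log_mul (marg_pos hpos _).ne' (prod_pos fun t _ => htrans _ _).ne',
    Real.log_prod fun t _ => (htrans _ _).ne']
  simp_rw [Real.log_div (hpos _ _).ne' (marg_pos hpos _).ne']

lemma log_pathP_eq_neg_mul_J_add_boundary {n m : ℕ} {μ : Fin n → Fin n → ℝ}
    (hpos : ∀ i j, 0 < μ i j) (x : Fin (m+1) → Fin n) :
    Real.log (pathP μ x) =
      -(((m:ℝ)+1) * (J2 (emp2 x) μ - J1 (marg (emp2 x)) (marg μ)))
      + (Real.log (marg μ (x 0)) + Real.log (marg μ (x (Fin.last m)))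
          - Real.log (μ (x (Fin.last m)) (x 0))) := by
  have hcyc := Fin.sum_cyclic_pairs x fun i j => Real.log (μ i j) - Real.log (marg μ i)
  rw [sum_sub_distrib] at hcyc
  rw [log_pathP hpos, mul_sub, J1_marg, mul_J2_emp2, mul_J2_emp2]
  linarith

lemma log_sInf_range_le {ι : Type*} [Finite ι] {f : ι → ℝ} (hf : ∀ i, 0 < f i) (i : ι) :
    Real.log (sInf (Set.range f)) ≤ Real.log (f i) := by
  obtain ⟨k, hk⟩ := (Set.range_nonempty_iff_nonempty.2 ⟨i⟩).csInf_mem (Set.finite_range f)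
  exact Real.log_le_log (hk ▸ hf k) (csInf_le (Set.finite_range f).bddBelow ⟨i, rfl⟩)

lemma log_le_log_sSup_range {ι : Type*} [Finite ι] {f : ι → ℝ} {i : ι} (hf : 0 < f i) :
    Real.log (f i) ≤ Real.log (sSup (Set.range f)) :=
  Real.log_le_log hf (le_csSup (Set.finite_range f).bddAbove ⟨i, rfl⟩)

theorem stmt5_general {n : ℕ} (μ : Fin n → Fin n → ℝ)
    (hpos : ∀ i j, 0 < μ i j) :
    ∀ (m : ℕ) (x : Fin (m+1) → Fin n),
      (-(((m:ℝ)+1) * (J2 (emp2 x) μ - J1 (marg (emp2 x)) (marg μ)))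
          + (2 * Real.log (sInf (Set.range (marg μ)))
              - Real.log (sSup (Set.range fun p : Fin n × Fin n => μ p.1 p.2)))
        ≤ Real.log (pathP μ x)) ∧
      (Real.log (pathP μ x)
        ≤ -(((m:ℝ)+1) * (J2 (emp2 x) μ - J1 (marg (emp2 x)) (marg μ)))
          + (2 * Real.log (sSup (Set.range (marg μ)))
              - Real.log (sInf (Set.range fun p : Fin n × Fin n => μ p.1 p.2)))) := by
  intro m x
  have hmarg := marg_pos hpos
  have hμ : ∀ p : Fin n × Fin n, 0 < μ p.1 p.2 := fun p => hpos p.1 p.2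
  have hfirst_lo := log_sInf_range_le hmarg (x 0)
  have hlast_lo := log_sInf_range_le hmarg (x (Fin.last m))
  have hfirst_hi := log_le_log_sSup_range (hmarg (x 0))
  have hlast_hi := log_le_log_sSup_range (hmarg (x (Fin.last m)))
  have hwrap_lo := log_sInf_range_le hμ (x (Fin.last m), x 0)
  have hwrap_hi :=
    log_le_log_sSup_range (f := fun p : Fin n × Fin n => μ p.1 p.2) (hμ (x (Fin.last m), x 0))
  rw [log_pathP_eq_neg_mul_J_add_boundary hpos]
  constructor <;> linarith

/-- For a stationary Markov chain with strictly positive doublet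
frequency vector `μ ∈ M_s(A²)`, set
`c̲ = 2 log(min_i μ̄_i) − log(max_{ij} μ_{ij})` and
`c̄ = 2 log(max_i μ̄_i) − log(min_{ij} μ_{ij})`.  Then for every `l ≥ 1` (here `l = m+1`)
and every sample path `x_1^l`, with `ν = ν(x_1^l)` the cyclic empirical doublet measure,
`−l[J(ν,μ) − J(ν̄,μ̄)] + c̲ ≤ log Pr{X_1^l = x_1^l} ≤ −l[J(ν,μ) − J(ν̄,μ̄)] + c̄`. -/
theorem stmt5 {n : ℕ} (hn : 0 < n) (μ : Fin n → Fin n → ℝ)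
    (hμ : IsProb2 μ ∧ IsStat2 μ) (hpos : ∀ i j, 0 < μ i j) :
    ∀ (m : ℕ) (x : Fin (m+1) → Fin n),
      (-(((m:ℝ)+1) * (J2 (emp2 x) μ - J1 (marg (emp2 x)) (marg μ)))
          + (2 * Real.log (sInf (Set.range (marg μ)))
              - Real.log (sSup (Set.range fun p : Fin n × Fin n => μ p.1 p.2)))
        ≤ Real.log (pathP μ x)) ∧
      (Real.log (pathP μ x)
        ≤ -(((m:ℝ)+1) * (J2 (emp2 x) μ - J1 (marg (emp2 x)) (marg μ)))
          + (2 * Real.log (sSup (Set.range (marg μ)))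
              - Real.log (sInf (Set.range fun p : Fin n × Fin n => μ p.1 p.2)))) :=
  stmt5_general μ hpos
end

section
/- (Sanov's theorem for a finite alphabet) Let {X_t} be an i.i.d. process taking values in a finite set A = {1,...,n} with one-dimensional marginal μ ∈ S_n, and let φ(x_1^l) ∈ S_n be the empirical singleton measure. Then the S_n-valued process {φ(x_1^l)} satisfies the large deviation property with rate function I(ν) = D(ν‖μ): for every open Γ ⊆ S_n, −inf_{ν∈Γ} D(ν‖μ) ≤ liminf_{l→∞} (1/l) log Pr{φ(x_1^l) ∈ Γ}, and for every closed Γ ⊆ S_n, limsup_{l→∞} (1/l) log Pr{φ(x_1^l) ∈ Γ} ≤ −inf_{ν∈Γ} D(ν‖μ). -/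
open Finset Filter

/-- The simplex `S_n` of probability vectors. -/
def simplex (n : ℕ) : Set (Fin n → ℝ) := {p | (∀ i, 0 ≤ p i) ∧ ∑ i, p i = 1}

open scoped Classical in
/-- Relative entropy `D(ν‖μ)`, equal to `+∞` unless `ν` is dominated by `μ`. -/
noncomputable def DKLe {n : ℕ} (ν μ : Fin n → ℝ) : EReal :=
  if ∀ i, μ i = 0 → ν i = 0 then (((∑ i, ν i * Real.log (ν i / μ i)) : ℝ) : EReal) else ⊤

/-- Empirical singleton measure of a sample path of length `l = m+1`. -/
noncomputable def emp1 {n m : ℕ} (x : Fin (m+1) → Fin n) : Fin n → ℝ :=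
  fun i => (∑ t : Fin (m+1), if x t = i then (1:ℝ) else 0) / (m+1)

open scoped Classical in
/-- `Pr{φ(x_1^l) ∈ Γ}` for the i.i.d. process with marginal `μ`:
`Pr{X_1^l = x_1^l} = ∏_t μ(x_t)`. -/
noncomputable def prEventIID {n : ℕ} (μ : Fin n → ℝ) (m : ℕ) (Γ : Set (Fin n → ℝ)) : ℝ :=
  ∑ x : Fin (m+1) → Fin n, if emp1 x ∈ Γ then ∏ t, μ (x t) else 0

/-- Extended-real logarithm, `elog p = −∞` for `p ≤ 0`. -/
noncomputable def elog (p : ℝ) : EReal := if p ≤ 0 then ⊥ else ((Real.log p : ℝ) : EReal)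

/-- ℓ¹ (total variation) distance on probability vectors. -/
def dist1v {n : ℕ} (p q : Fin n → ℝ) : ℝ := ∑ i, |p i - q i|

def OpenInV {n : ℕ} (S Γ : Set (Fin n → ℝ)) : Prop :=
  ∀ ζ ∈ Γ, ∃ ε > 0, ∀ ξ ∈ S, dist1v ξ ζ < ε → ξ ∈ Γ

def ClosedInV {n : ℕ} (S Γ : Set (Fin n → ℝ)) : Prop := OpenInV S (S \ Γ)

/-!
Method of types. A sample `x` of length `l` with empirical measure `p` has probability at most
`exp(-l D(p‖μ)) pˡ(x)`, and the samples of one type carry `pˡ`-mass at most `1`; as there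
are at most `(l+1)ⁿ` types, `Pr{φ ∈ Γ} ≤ (l+1)ⁿ exp(-l inf_Γ D(·‖μ))` for every `Γ`.
For the lower bound fix `ν ∈ Γ`. On samples whose empirical measure is `η`-close to `ν` the
likelihood ratio `νˡ(x)/μˡ(x) = exp(l Σᵢ φᵢ log(νᵢ/μᵢ))` is at most `exp(l (D(ν‖μ) + δ))`; these
samples lie in `Γ` and, by Chebyshev's inequality, carry `νˡ`-mass at least `1/2` for large `l`.
-/

open Real Topology

section IID

variable {n l : ℕ}

lemma sum_prod_mul_prod (w : Fin n → ℝ) (f : Fin l → Fin n → ℝ) :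
    ∑ x : Fin l → Fin n, (∏ t, w (x t)) * ∏ t, f t (x t) = ∏ t, ∑ j, w j * f t j := by
  simp_rw [← prod_mul_distrib]
  exact (Fintype.prod_sum fun t j => w j * f t j).symm

lemma sum_prod_eq_one {w : Fin n → ℝ} (hw : ∑ j, w j = 1) :
    ∑ x : Fin l → Fin n, ∏ t, w (x t) = 1 := by
  simpa [hw] using sum_prod_mul_prod (l := l) w (fun _ _ => 1)

lemma sum_prod_mul_apply_mul_apply {w : Fin n → ℝ} (hw : ∑ j, w j = 1) (s t : Fin l)
    (g h : Fin n → ℝ) :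
    ∑ x : Fin l → Fin n, (∏ r, w (x r)) * (g (x s) * h (x t)) =
      if s = t then ∑ j, w j * (g j * h j) else (∑ j, w j * g j) * ∑ j, w j * h j := by
  calc ∑ x : Fin l → Fin n, (∏ r, w (x r)) * (g (x s) * h (x t))
      = ∑ x : Fin l → Fin n, (∏ r, w (x r)) *
          ∏ r, (if r = s then g (x r) else 1) * (if r = t then h (x r) else 1) := by
        simp only [prod_mul_distrib, prod_ite_eq', mem_univ, if_true]
    _ = ∏ r, ∑ j, w j * ((if r = s then g j else 1) * (if r = t then h j else 1)) :=
        sum_prod_mul_prod w fun r j => (if r = s then g j else 1) * (if r = t then h j else 1)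
    _ = _ := by
        split_ifs with hst
        · subst hst
          rw [prod_congr rfl fun r _ => (?_ : _ = if r = s then ∑ j, w j * (g j * h j) else 1),
            prod_ite_eq']
          · simp
          · by_cases hr : r = s <;> simp [hr, hw]
        · rw [prod_congr rfl fun r _ => (?_ : _ =
            (if r = s then ∑ j, w j * g j else 1) * (if r = t then ∑ j, w j * h j else 1)),
            prod_mul_distrib, prod_ite_eq', prod_ite_eq']
          · simp
          · by_cases hs : r = s <;> by_cases ht : r = t <;> simp_all

lemma sum_prod_mul_sq_sum_apply {w : Fin n → ℝ} (hw : ∑ j, w j = 1) {a : Fin n → ℝ}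
    (ha : ∑ j, w j * a j = 0) :
    ∑ x : Fin l → Fin n, (∏ t, w (x t)) * (∑ t, a (x t)) ^ 2 = l * ∑ j, w j * a j ^ 2 := by
  simp_rw [sq, sum_mul_sum, mul_sum, sum_comm (γ := Fin l → Fin n),
    sum_prod_mul_apply_mul_apply hw, ha, zero_mul]
  simp [mul_sum]

end IID

section Empirical

variable {n m : ℕ}

lemma sum_apply_eq_mul_sum_emp1 (x : Fin (m+1) → Fin n) (f : Fin n → ℝ) :
    ∑ t, f (x t) = (m+1) * ∑ i, emp1 x i * f i := by
  have hm : ((m:ℝ)+1) ≠ 0 := by positivity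
  simp only [emp1, div_mul_eq_mul_div, ← sum_div, mul_div_cancel₀ _ hm, sum_mul, ite_mul,
    one_mul, zero_mul]
  rw [sum_comm]
  simp

lemma emp1_nonneg (x : Fin (m+1) → Fin n) (i : Fin n) : 0 ≤ emp1 x i :=
  div_nonneg (sum_nonneg fun _ _ => by split_ifs <;> norm_num) (by positivity)

lemma sum_emp1 (x : Fin (m+1) → Fin n) : ∑ i, emp1 x i = 1 := by
  have h := sum_apply_eq_mul_sum_emp1 x fun _ => 1
  simp only [sum_const, card_univ, Fintype.card_fin, nsmul_eq_mul, mul_one, Nat.cast_add,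
    Nat.cast_one] at h
  exact (mul_eq_left₀ (by positivity)).1 h.symm

lemma emp1_mem_simplex (x : Fin (m+1) → Fin n) : emp1 x ∈ simplex n :=
  ⟨emp1_nonneg x, sum_emp1 x⟩

lemma emp1_apply_pos (x : Fin (m+1) → Fin n) (t : Fin (m+1)) : 0 < emp1 x (x t) :=
  div_pos (sum_pos' (fun _ _ => by split_ifs <;> norm_num) ⟨t, mem_univ t, by simp⟩)
    (by positivity)

lemma exists_apply_eq_of_emp1_ne_zero {x : Fin (m+1) → Fin n} {i : Fin n}
    (h : emp1 x i ≠ 0) : ∃ t, x t = i := by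
  by_contra! hx
  simp [emp1, hx] at h

end Empirical

section Types

variable {n m : ℕ}

lemma card_image_emp1_le :
    (univ.image (emp1 : (Fin (m+1) → Fin n) → Fin n → ℝ)).card ≤ (m+2)^n := by
  have hsub : univ.image (emp1 : (Fin (m+1) → Fin n) → Fin n → ℝ) ⊆
      univ.image fun q : Fin n → Fin (m+2) => fun i => ((q i : ℕ) : ℝ) / (m+1) := by
    intro p hp
    obtain ⟨x, -, rfl⟩ := mem_image.1 hp
    refine mem_image.2 ⟨fun i => ⟨#{t | x t = i}, Nat.lt_succ_of_le ?_⟩, mem_univ _, ?_⟩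
    · exact (card_filter_le _ _).trans_eq (by simp)
    · funext i
      simp [emp1, sum_boole]
  calc _ ≤ _ := card_le_card hsub
    _ ≤ (univ : Finset (Fin n → Fin (m+2))).card := card_image_le
    _ = (m+2)^n := by simp

lemma sum_prod_emp1_le : ∑ x : Fin (m+1) → Fin n, ∏ t, emp1 x (x t) ≤ ((m:ℝ)+2)^n := by
  rw [← sum_fiberwise_of_maps_to (g := emp1) (t := univ.image emp1)
    fun x _ => mem_image_of_mem _ (mem_univ x)]
  refine (sum_le_sum fun p hp => (?_ : _ ≤ (1:ℝ))).trans ?_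
  · obtain ⟨x₀, -, rfl⟩ := mem_image.1 hp
    rw [← sum_prod_eq_one (l := m+1) (sum_emp1 x₀)]
    refine (sum_le_sum fun x hx => ?_).trans
      (sum_le_univ_sum_of_nonneg fun x => prod_nonneg fun t _ => emp1_nonneg _ _)
    rw [(mem_filter.1 hx).2]
  · rw [sum_const, nsmul_one]
    exact_mod_cast card_image_emp1_le

end Types

section Concentration

variable {n m : ℕ} {w : Fin n → ℝ}

lemma sum_prod_mul_sq_emp1_sub (hw : ∑ j, w j = 1) (i : Fin n) :
    ∑ x : Fin (m+1) → Fin n, (∏ t, w (x t)) * (emp1 x i - w i)^2 = (w i - w i^2) / (m+1) := by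
  set a : Fin n → ℝ := fun j => (if j = i then 1 else 0) - w i
  have hsum : ∀ x : Fin (m+1) → Fin n, ∑ t, a (x t) = (m+1) * (emp1 x i - w i) := fun x => by
    rw [sum_apply_eq_mul_sum_emp1]
    simp [a, mul_sub, sum_sub_distrib, ← sum_mul, sum_emp1]
  have ha : ∑ j, w j * a j = 0 := by simp [a, mul_sub, ← sum_mul, hw]
  have ha2 : ∑ j, w j * a j ^ 2 = w i - w i^2 := by
    simp [a, sub_sq, mul_add, mul_sub, sum_add_distrib, sum_sub_distrib, ← sum_mul, hw]
    ring
  have h := sum_prod_mul_sq_sum_apply (l := m+1) hw ha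
  simp_rw [hsum, ha2, mul_pow] at h
  push_cast at h
  have hm : ((m:ℝ)+1) ≠ 0 := by positivity
  rw [eq_div_iff hm]
  apply mul_left_cancel₀ hm
  rw [← h, sum_mul, mul_sum]
  exact sum_congr rfl fun x _ => by ring

lemma prEventIID_setOf_le_dist1v_le (hw : w ∈ simplex n) {η : ℝ} (hη : 0 < η) (m : ℕ) :
    prEventIID w m {p | η ≤ dist1v p w} ≤ n / ((m+1) * η^2) := by
  have hP : ∀ x : Fin (m+1) → Fin n, 0 ≤ ∏ t, w (x t) := fun x => prod_nonneg fun t _ => hw.1 _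
  calc prEventIID w m {p | η ≤ dist1v p w}
      ≤ ∑ x : Fin (m+1) → Fin n, (∏ t, w (x t)) * (n / η^2 * ∑ i, (emp1 x i - w i)^2) := by
        refine sum_le_sum fun x _ => ?_
        split_ifs with hx
        · refine le_mul_of_one_le_right (hP x) ?_
          rw [div_mul_eq_mul_div, one_le_div (by positivity)]
          calc η^2 ≤ dist1v (emp1 x) w ^ 2 := pow_le_pow_left₀ hη.le hx 2
            _ ≤ n * ∑ i, (emp1 x i - w i)^2 := by
              simpa [dist1v] using sq_sum_le_card_mul_sum_sq (s := univ)
                (f := fun i => |emp1 x i - w i|)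
        · exact mul_nonneg (hP x) (by positivity)
    _ = n / η^2 * ∑ i, (w i - w i^2) / (m+1) := by
        simp_rw [← sum_prod_mul_sq_emp1_sub hw.2, mul_sum, mul_left_comm _ (n / η^2 : ℝ)]
        exact sum_comm
    _ ≤ n / η^2 * ∑ i, w i / (m+1) := by
        gcongr with i
        nlinarith [sq_nonneg (w i)]
    _ = n / ((m+1) * η^2) := by
        rw [← sum_div, hw.2]
        field_simp

end Concentration

section Probability

variable {n : ℕ} {μ : Fin n → ℝ}

lemma prEventIID_mono (hμ : ∀ i, 0 ≤ μ i) {Γ Γ' : Set (Fin n → ℝ)}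
    (h : ∀ p ∈ simplex n, p ∈ Γ → p ∈ Γ') (m : ℕ) : prEventIID μ m Γ ≤ prEventIID μ m Γ' :=
  sum_le_sum fun x _ => by
    by_cases hx : emp1 x ∈ Γ
    · rw [if_pos hx, if_pos (h _ (emp1_mem_simplex x) hx)]
    · rw [if_neg hx]
      split_ifs
      exacts [prod_nonneg fun t _ => hμ _, le_rfl]

lemma prEventIID_add_compl (hμ : ∑ i, μ i = 1) (m : ℕ) (Γ : Set (Fin n → ℝ)) :
    prEventIID μ m Γ + prEventIID μ m Γᶜ = 1 := by
  rw [prEventIID, prEventIID, ← sum_add_distrib, ← sum_prod_eq_one (l := m+1) hμ]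
  refine sum_congr rfl fun x _ => ?_
  by_cases hx : emp1 x ∈ Γ <;> simp [hx]

end Probability

section LikelihoodRatio

variable {n m : ℕ}

lemma prod_le_exp_mul_prod (x : Fin (m+1) → Fin n) {P Q : Fin n → ℝ} (hP : ∀ i, 0 ≤ P i)
    (hQ : ∀ i, 0 ≤ Q i) (hPQ : ∀ t, 0 < P (x t) → 0 < Q (x t)) {a : ℝ}
    (ha : ∑ i, emp1 x i * log (P i / Q i) ≤ a) :
    ∏ t, P (x t) ≤ exp ((m+1) * a) * ∏ t, Q (x t) := by
  by_cases hzero : ∃ t, P (x t) = 0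
  · obtain ⟨t, ht⟩ := hzero
    rw [prod_eq_zero (mem_univ t) ht]
    exact mul_nonneg (exp_pos _).le (prod_nonneg fun t _ => hQ _)
  have hPpos : ∀ t, 0 < P (x t) := fun t => (hP _).lt_of_ne' fun h => hzero ⟨t, h⟩
  have hratio : ∏ t, P (x t) = exp (∑ t, log (P (x t) / Q (x t))) * ∏ t, Q (x t) := by
    rw [exp_sum, ← prod_mul_distrib]
    refine prod_congr rfl fun t _ => ?_
    rw [exp_log (div_pos (hPpos t) (hPQ t (hPpos t))), div_mul_cancel₀ _ (hPQ t (hPpos t)).ne']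
  rw [hratio, sum_apply_eq_mul_sum_emp1 x fun i => log (P i / Q i)]
  gcongr
  exact prod_nonneg fun t _ => hQ _

lemma prod_le_exp_mul_prod_emp1 {μ : Fin n → ℝ} (hμ : ∀ i, 0 ≤ μ i) (x : Fin (m+1) → Fin n)
    {c : ℝ} (hc : (c : EReal) ≤ DKLe (emp1 x) μ) :
    ∏ t, μ (x t) ≤ exp ((m+1) * -c) * ∏ t, emp1 x (x t) := by
  by_cases hdom : ∀ i, μ i = 0 → emp1 x i = 0
  · rw [DKLe, if_pos hdom, EReal.coe_le_coe_iff] at hc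
    refine prod_le_exp_mul_prod x hμ (emp1_nonneg x) (fun t _ => emp1_apply_pos x t) ?_
    have hlog : ∀ i, log (μ i / emp1 x i) = -log (emp1 x i / μ i) := fun i => by
      rw [← log_inv, inv_div]
    simp_rw [hlog, mul_neg, sum_neg_distrib]
    exact neg_le_neg hc
  · push Not at hdom
    obtain ⟨i, hμi, hi⟩ := hdom
    obtain ⟨t, rfl⟩ := exists_apply_eq_of_emp1_ne_zero hi
    rw [prod_eq_zero (mem_univ t) hμi]
    exact mul_nonneg (exp_pos _).le (prod_nonneg fun t _ => emp1_nonneg _ _)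

lemma prEventIID_le_exp_mul {P Q : Fin n → ℝ} (hP : ∀ i, 0 ≤ P i) (hQ : ∀ i, 0 ≤ Q i)
    (hPQ : ∀ i, Q i = 0 → P i = 0) {Γ : Set (Fin n → ℝ)} {a : ℝ}
    (h : ∀ p ∈ simplex n, p ∈ Γ → ∑ i, p i * log (P i / Q i) ≤ a) (m : ℕ) :
    prEventIID P m Γ ≤ exp ((m+1) * a) * prEventIID Q m Γ := by
  rw [prEventIID, prEventIID, mul_sum]
  refine sum_le_sum fun x _ => ?_
  split_ifs with hx
  · exact prod_le_exp_mul_prod x hP hQ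
      (fun t ht => (hQ _).lt_of_ne' fun h0 => ht.ne' (hPQ _ h0))
      (h _ (emp1_mem_simplex x) hx)
  · simp

end LikelihoodRatio

section Bounds

variable {n : ℕ} {μ : Fin n → ℝ}

lemma prEventIID_le_of_forall_le_DKLe (hμ : ∀ i, 0 ≤ μ i) {Γ : Set (Fin n → ℝ)} {c : ℝ}
    (hc : ∀ ν ∈ Γ, (c : EReal) ≤ DKLe ν μ) (m : ℕ) :
    prEventIID μ m Γ ≤ ((m:ℝ)+2)^n * exp ((m+1) * -c) := by
  calc prEventIID μ m Γ
      ≤ ∑ x : Fin (m+1) → Fin n, exp ((m+1) * -c) * ∏ t, emp1 x (x t) := by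
        refine sum_le_sum fun x _ => ?_
        split_ifs with hx
        · exact prod_le_exp_mul_prod_emp1 hμ x (hc _ hx)
        · exact mul_nonneg (exp_pos _).le (prod_nonneg fun t _ => emp1_nonneg _ _)
    _ ≤ exp ((m+1) * -c) * ((m:ℝ)+2)^n := by
        rw [← mul_sum]
        gcongr
        exact sum_prod_emp1_le
    _ = ((m:ℝ)+2)^n * exp ((m+1) * -c) := mul_comm _ _

lemma sum_sub_mul_le_dist1v_mul (p q f : Fin n → ℝ) :
    ∑ i, (p i - q i) * f i ≤ dist1v p q * ∑ i, |f i| := by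
  calc ∑ i, (p i - q i) * f i ≤ ∑ i, |p i - q i| * ∑ j, |f j| := by
        refine sum_le_sum fun i _ => ?_
        calc (p i - q i) * f i ≤ |p i - q i| * |f i| := (le_abs_self _).trans (abs_mul _ _).le
          _ ≤ |p i - q i| * ∑ j, |f j| := by
            gcongr
            exact single_le_sum (f := fun j => |f j|) (fun j _ => abs_nonneg _) (mem_univ i)
    _ = dist1v p q * ∑ i, |f i| := by rw [dist1v, sum_mul]

lemma eventually_le_prEventIID (hμ : μ ∈ simplex n) {Γ : Set (Fin n → ℝ)}
    (hΓ : OpenInV (simplex n) Γ) {ν : Fin n → ℝ} (hνΓ : ν ∈ Γ) (hν : ν ∈ simplex n) {c : ℝ}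
    (hc : DKLe ν μ < c) :
    ∀ᶠ m : ℕ in atTop, 2⁻¹ * exp ((m+1) * -c) ≤ prEventIID μ m Γ := by
  have hdom : ∀ i, μ i = 0 → ν i = 0 := by
    by_contra h
    rw [DKLe, if_neg h] at hc
    exact not_top_lt hc
  set L : Fin n → ℝ := fun i => log (ν i / μ i)
  set D := ∑ i, ν i * L i
  have hD : D < c := by
    rw [DKLe, if_pos hdom] at hc
    exact_mod_cast hc
  obtain ⟨ε, hε, hball⟩ := hΓ ν hνΓ
  set M := ∑ i, |L i|
  have hM : 0 ≤ M := sum_nonneg fun i _ => abs_nonneg _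
  set η := min ε ((c - D) / (M + 1))
  have hη : 0 < η := lt_min hε (div_pos (by linarith) (by positivity))
  set B := {p : Fin n → ℝ | dist1v p ν < η}
  have hBΓ : ∀ p ∈ simplex n, p ∈ B → p ∈ Γ := fun p hp hpB =>
    hball p hp (lt_of_lt_of_le hpB (min_le_left _ _))
  have hBL : ∀ p ∈ simplex n, p ∈ B → ∑ i, p i * L i ≤ c := fun p _ hpB => by
    have hsplit : ∑ i, p i * L i = D + ∑ i, (p i - ν i) * L i := by
      rw [← sum_add_distrib]
      exact sum_congr rfl fun i _ => by ring
    have hηM : η * M ≤ c - D := by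
      calc η * M ≤ (c - D) / (M + 1) * M := by gcongr; exact min_le_right _ _
        _ ≤ c - D := by
          rw [div_mul_eq_mul_div, div_le_iff₀ (by positivity)]
          nlinarith
    have := sum_sub_mul_le_dist1v_mul p ν L
    nlinarith [mul_le_mul_of_nonneg_right (le_of_lt (show dist1v p ν < η from hpB)) hM]
  have hfar : ∀ᶠ m : ℕ in atTop, (n:ℝ) / ((m+1) * η^2) ≤ 2⁻¹ := by
    have h := tendsto_one_div_add_atTop_nhds_zero_nat.const_mul ((n:ℝ) / η^2)
    rw [mul_zero] at h
    filter_upwards [h.eventually_le_const (by norm_num : (0:ℝ) < 2⁻¹)] with m hm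
    calc (n:ℝ) / ((m+1) * η^2) = n / η^2 * (1 / (m+1)) := by field_simp
      _ ≤ 2⁻¹ := hm
  filter_upwards [hfar] with m hm
  have hνB : 2⁻¹ ≤ prEventIID ν m B := by
    have hcompl : prEventIID ν m Bᶜ ≤ n / ((m+1) * η^2) :=
      (prEventIID_mono hν.1 (Γ := Bᶜ) (Γ' := {p | η ≤ dist1v p ν})
        (fun p _ (hp : ¬ dist1v p ν < η) => not_lt.1 hp) m).trans
        (prEventIID_setOf_le_dist1v_le hν hη m)
    linarith [prEventIID_add_compl hν.2 m B]
  calc 2⁻¹ * exp ((m+1) * -c) ≤ prEventIID ν m B * exp ((m+1) * -c) := by gcongr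
    _ ≤ exp ((m+1) * c) * prEventIID μ m B * exp ((m+1) * -c) := by
        gcongr
        exact prEventIID_le_exp_mul hν.1 hμ.1 hdom hBL m
    _ = prEventIID μ m B := by
        rw [mul_comm, ← mul_assoc, ← exp_add]
        simp
    _ ≤ prEventIID μ m Γ := prEventIID_mono hμ.1 hBΓ m

end Bounds

section Asymptotics

variable {p : ℕ → ℝ} {b : ℝ}

lemma le_liminf_of_le_mul_exp {C : ℝ} (hC : 0 < C)
    (h : ∀ᶠ m : ℕ in atTop, C * exp ((m+1) * b) ≤ p m) :
    (b : EReal) ≤ liminf (fun m : ℕ => ((((m:ℝ)+1)⁻¹ : ℝ) : EReal) * elog (p m)) atTop := by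
  have hlim : Tendsto (fun m : ℕ => log C * (1 / ((m:ℝ)+1)) + b) atTop (𝓝 b) := by
    simpa using (tendsto_one_div_add_atTop_nhds_zero_nat.const_mul (log C)).add_const b
  rw [← (EReal.tendsto_coe.2 hlim).liminf_eq]
  refine liminf_le_liminf (h.mono fun m hm => ?_)
  have hp : 0 < p m := (by positivity : 0 < C * exp ((m+1) * b)).trans_le hm
  rw [elog, if_neg (not_le.2 hp), ← EReal.coe_mul, EReal.coe_le_coe_iff,
    le_inv_mul_iff₀ (by positivity)]
  have hlog := log_le_log (by positivity) hm
  rw [log_mul hC.ne' (exp_pos _).ne', log_exp] at hlog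
  calc ((m:ℝ)+1) * (log C * (1 / ((m:ℝ)+1)) + b) = log C + (m+1) * b := by field_simp
    _ ≤ log (p m) := hlog

lemma limsup_le_of_le_pow_mul_exp {k : ℕ} (h : ∀ m : ℕ, p m ≤ ((m:ℝ)+2)^k * exp ((m+1) * b)) :
    limsup (fun m : ℕ => ((((m:ℝ)+1)⁻¹ : ℝ) : EReal) * elog (p m)) atTop ≤ b := by
  have hlog : Tendsto (fun m : ℕ => log ((m:ℝ)+2) / ((m:ℝ)+1)) atTop (𝓝 0) := by
    have h2 : Tendsto (fun m : ℕ => (m:ℝ)+2) atTop atTop :=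
      tendsto_atTop_add_const_right _ 2 tendsto_natCast_atTop_atTop
    refine ((Real.tendsto_pow_log_div_mul_add_atTop 1 (-1) 1 one_ne_zero).comp h2).congr
      fun m => ?_
    simp only [Function.comp, pow_one]
    congr 1
    ring
  have hlim : Tendsto (fun m : ℕ => k * (log ((m:ℝ)+2) / ((m:ℝ)+1)) + b) atTop (𝓝 b) := by
    simpa using (hlog.const_mul (k:ℝ)).add_const b
  rw [← (EReal.tendsto_coe.2 hlim).limsup_eq]
  refine limsup_le_limsup (Eventually.of_forall fun m => ?_)
  dsimp only
  rcases le_or_gt (p m) 0 with hp | hp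
  · rw [elog, if_pos hp, EReal.coe_mul_bot_of_pos (by positivity)]
    exact bot_le
  rw [elog, if_neg (not_le.2 hp), ← EReal.coe_mul, EReal.coe_le_coe_iff,
    inv_mul_le_iff₀ (by positivity)]
  have hle := log_le_log hp (h m)
  rw [log_mul (by positivity) (exp_pos _).ne', log_exp, log_pow] at hle
  calc log (p m) ≤ k * log ((m:ℝ)+2) + (m+1) * b := hle
    _ = ((m:ℝ)+1) * (k * (log ((m:ℝ)+2) / ((m:ℝ)+1)) + b) := by field_simp

end Asymptotics

/-- **Sanov's theorem for a finite alphabet.**  For an i.i.d. process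
with one-dimensional marginal `μ ∈ S_n`, the empirical singleton measures satisfy the
LDP with rate function `I(ν) = D(ν‖μ)`: for every open `Γ ⊆ S_n`,
`−inf_Γ D(·‖μ) ≤ liminf (1/l) log Pr{φ(x_1^l) ∈ Γ}`, and for every closed `Γ ⊆ S_n`,
`limsup (1/l) log Pr{φ(x_1^l) ∈ Γ} ≤ −inf_Γ D(·‖μ)`. -/
theorem stmt14 {n : ℕ} (μ : Fin n → ℝ) (hμ : μ ∈ simplex n)
    (Γ : Set (Fin n → ℝ)) (hΓ : Γ ⊆ simplex n) :
    (OpenInV (simplex n) Γ →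
      -(⨅ ν ∈ Γ, DKLe ν μ)
        ≤ Filter.liminf
            (fun m : ℕ => ((((m:ℝ)+1)⁻¹ : ℝ) : EReal) * elog (prEventIID μ m Γ))
            Filter.atTop) ∧
    (ClosedInV (simplex n) Γ →
      Filter.limsup
          (fun m : ℕ => ((((m:ℝ)+1)⁻¹ : ℝ) : EReal) * elog (prEventIID μ m Γ))
          Filter.atTop
        ≤ -(⨅ ν ∈ Γ, DKLe ν μ)) := by
  refine ⟨fun hopen => EReal.ge_of_forall_gt_iff_ge.1 fun z hz => ?_,
    fun _ => EReal.le_of_forall_lt_iff_le.1 fun z hz => ?_⟩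
  · obtain ⟨ν, hνΓ, hν⟩ : ∃ ν ∈ Γ, DKLe ν μ < ((-z : ℝ) : EReal) := by
      simpa [iInf_lt_iff] using EReal.lt_neg_comm.1 hz
    simpa using le_liminf_of_le_mul_exp (by norm_num : (0:ℝ) < 2⁻¹)
      (eventually_le_prEventIID hμ hopen hνΓ (hΓ hνΓ) hν)
  · have hc : ∀ ν ∈ Γ, ((-z : ℝ) : EReal) ≤ DKLe ν μ :=
      le_iInf₂_iff.1 (by simpa using (EReal.neg_lt_comm.1 hz).le)
    simpa using limsup_le_of_le_pow_mul_exp (prEventIID_le_of_forall_le_DKLe hμ.1 hc)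
end

section
/- Let ν ∈ M_s(A²) be a stationary distribution on A² with marginal φ = ν̄, and let c₁,...,c_n be arbitrary real constants. Then Σ_{i∈A} Σ_{j∈A} ν_{ij} c_i = Σ_{i∈A} Σ_{j∈A} ν_{ij} c_j; moreover, if μ ∈ M_s(A²) has μ_{ij} > 0 for all i,j with transition matrix a_{ij} = μ_{ij}/μ̄_i, u* > 0 is a maximizer of g(u) = Σ_i φ_i log(u_i/(Au)_i), b_{ij} = a_{ij} u*_j / (Au*)_i, and ν*_{ij} = φ_i b_{ij}, then every ν ∈ M_s(A²) with ν̄ = φ satisfies D_c(ν‖μ) = D_c(ν‖ν*) + g(u*), and hence D_c(ν‖μ) ≥ g(u*). -/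
/-!
Factor `ν*_{ij}/μ_{ij} = (φ_i/μ̄_i) · (u*_j/(Au*)_i)`. Splitting `log(ν/μ) = log(ν/ν*) + log(ν*/μ)`
and using stationarity of `ν` to move the column term `log u*_j` onto the row index turns
`Σ ν_{ij} log(ν*_{ij}/μ_{ij})` into `D(φ‖μ̄) + g(u*)`. Since `ν` and `ν*` both have marginal `φ`,
`D_c(ν‖ν*) = D(ν‖ν*)`, which is nonnegative by Gibbs' inequality.
-/

open Finset

/-- The set `M_s(A²)` of stationary probability distributions on `A²`. -/
def Ms2 (n : ℕ) : Set (Fin n → Fin n → ℝ) := {ν | IsProb2 ν ∧ IsStat2 ν}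

/-- Relative entropy of doublet distributions. -/
noncomputable def DKL2 {n : ℕ} (ν μ : Fin n → Fin n → ℝ) : ℝ :=
  ∑ i, ∑ j, ν i j * Real.log (ν i j / μ i j)

/-- Relative entropy of probability vectors. -/
noncomputable def DKL1 {n : ℕ} (p q : Fin n → ℝ) : ℝ := ∑ i, p i * Real.log (p i / q i)

/-- Conditional relative entropy `D_c(ν‖μ) = D(ν‖μ) − D(ν̄‖μ̄)`. -/
noncomputable def Dc {n : ℕ} (ν μ : Fin n → Fin n → ℝ) : ℝ :=
  DKL2 ν μ - DKL1 (marg ν) (marg μ)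

/-- The transition matrix `a_{ij} = μ_{ij}/μ̄_i` associated with `μ`. -/
noncomputable def aMat {n : ℕ} (μ : Fin n → Fin n → ℝ) : Fin n → Fin n → ℝ :=
  fun i j => μ i j / marg μ i

/-- `g(u) = Σ_i φ_i log(u_i / (Au)_i)`. -/
noncomputable def gfun {n : ℕ} (μ : Fin n → Fin n → ℝ) (φ : Fin n → ℝ)
    (u : Fin n → ℝ) : ℝ :=
  ∑ i, φ i * Real.log (u i / ∑ j, aMat μ i j * u j)

/-- `b_{ij} = a_{ij} u*_j / (Au*)_i`. -/
noncomputable def bMat {n : ℕ} (μ : Fin n → Fin n → ℝ) (ustar : Fin n → ℝ) :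
    Fin n → Fin n → ℝ :=
  fun i j => aMat μ i j * ustar j / ∑ k, aMat μ i k * ustar k

open Real

section

variable {n : ℕ}

lemma IsStat2.sum_sum_mul_left_eq {ν : Fin n → Fin n → ℝ} (hν : IsStat2 ν) (c : Fin n → ℝ) :
    ∑ i, ∑ j, ν i j * c i = ∑ i, ∑ j, ν i j * c j := by
  calc ∑ i, ∑ j, ν i j * c i = ∑ i, (∑ j, ν j i) * c i :=
        sum_congr rfl fun i _ => by rw [← sum_mul, hν i]
    _ = ∑ i, ∑ j, ν i j * c j := by simp only [sum_mul]; exact sum_comm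

lemma marg_pos_of_ne_zero {ν : Fin n → Fin n → ℝ} (hν : ∀ i j, 0 ≤ ν i j) {i j : Fin n}
    (hij : ν i j ≠ 0) : 0 < marg ν i :=
  sum_pos' (fun k _ => hν i k) ⟨j, mem_univ j, (hν i j).lt_of_ne' hij⟩

lemma sub_le_mul_log_div {x y : ℝ} (hx : 0 ≤ x) (hy : 0 ≤ y) (hxy : x ≠ 0 → 0 < y) :
    x - y ≤ x * log (x / y) := by
  obtain rfl | hx := hx.eq_or_lt
  · simpa using hy
  have hy := hxy hx.ne'
  have := mul_le_mul_of_nonneg_left (one_sub_inv_le_log_of_pos (div_pos hx hy)) hx.le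
  rwa [inv_div, mul_sub, mul_one, mul_div_cancel₀ _ hx.ne'] at this

lemma DKL1_self (p : Fin n → ℝ) : DKL1 p p = 0 := by
  refine sum_eq_zero fun i _ => ?_
  obtain h | h := eq_or_ne (p i) 0 <;> simp [h]

lemma DKL2_nonneg {ν ν' : Fin n → Fin n → ℝ} (hν : ∀ i j, 0 ≤ ν i j) (hν' : ∀ i j, 0 ≤ ν' i j)
    (hsupp : ∀ i j, ν i j ≠ 0 → 0 < ν' i j) (hmass : ∑ i, ∑ j, ν i j = ∑ i, ∑ j, ν' i j) :
    0 ≤ DKL2 ν ν' := by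
  have hgibbs : ∑ i, ∑ j, (ν i j - ν' i j) ≤ DKL2 ν ν' :=
    sum_le_sum fun i _ => sum_le_sum fun j _ =>
      sub_le_mul_log_div (hν i j) (hν' i j) (hsupp i j)
  simpa only [sum_sub_distrib, hmass, sub_self] using hgibbs

lemma Dc_nonneg_of_marg_eq {ν ν' : Fin n → Fin n → ℝ} (hν : ∀ i j, 0 ≤ ν i j)
    (hν' : ∀ i j, 0 ≤ ν' i j) (hsupp : ∀ i j, ν i j ≠ 0 → 0 < ν' i j) (h : marg ν = marg ν') :
    0 ≤ Dc ν ν' := by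
  rw [Dc, h, DKL1_self, sub_zero]
  exact DKL2_nonneg hν hν' hsupp (congrArg (fun p => ∑ i, p i) h)

lemma DKL2_eq_DKL2_add {ν ν' μ : Fin n → Fin n → ℝ} (hν' : ∀ i j, ν i j ≠ 0 → ν' i j ≠ 0)
    (hμ : ∀ i j, μ i j ≠ 0) :
    DKL2 ν μ = DKL2 ν ν' + ∑ i, ∑ j, ν i j * log (ν' i j / μ i j) := by
  simp only [DKL2, ← sum_add_distrib, ← mul_add]
  refine sum_congr rfl fun i _ => sum_congr rfl fun j _ => ?_
  obtain h | h := eq_or_ne (ν i j) 0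
  · simp [h]
  rw [log_div h (hμ i j), log_div h (hν' i j h), log_div (hν' i j h) (hμ i j)]
  ring

section bMat

variable {μ : Fin n → Fin n → ℝ} (hμ : ∀ i j, 0 < μ i j) {u : Fin n → ℝ} (hu : ∀ i, 0 < u i)
include hμ

lemma marg_pos_of_pos (i : Fin n) : 0 < marg μ i :=
  sum_pos (fun j _ => hμ i j) ⟨i, mem_univ i⟩

lemma aMat_pos (i j : Fin n) : 0 < aMat μ i j :=
  div_pos (hμ i j) (marg_pos_of_pos hμ i)

include hu

lemma sum_aMat_mul_pos (i : Fin n) : 0 < ∑ k, aMat μ i k * u k :=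
  sum_pos (fun k _ => mul_pos (aMat_pos hμ i k) (hu k)) ⟨i, mem_univ i⟩

lemma bMat_pos (i j : Fin n) : 0 < bMat μ u i j :=
  div_pos (mul_pos (aMat_pos hμ i j) (hu j)) (sum_aMat_mul_pos hμ hu i)

lemma marg_mul_bMat (φ : Fin n → ℝ) : marg (fun i j => φ i * bMat μ u i j) = φ := by
  funext i
  simp only [marg, bMat, ← mul_sum, ← sum_div, div_self (sum_aMat_mul_pos hμ hu i).ne', mul_one]

lemma log_mul_bMat_div {φ : Fin n → ℝ} {i : Fin n} (hφ : 0 < φ i) (j : Fin n) :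
    log (φ i * bMat μ u i j / μ i j) = log (φ i / marg μ i)
      + log (u i / ∑ k, aMat μ i k * u k) + (log (u j) - log (u i)) := by
  have hm := marg_pos_of_pos hμ i
  have hA := sum_aMat_mul_pos hμ hu i
  have hfactor : φ i * bMat μ u i j / μ i j = φ i / marg μ i * (u j / ∑ k, aMat μ i k * u k) := by
    simp only [bMat, aMat]
    field_simp [(hμ i j).ne']
  rw [hfactor, log_mul (div_pos hφ hm).ne' (div_pos (hu j) hA).ne',
    log_div (hu j).ne' hA.ne', log_div (hu i).ne' hA.ne']
  ring

lemma sum_sum_mul_log_mul_bMat_div {ν : Fin n → Fin n → ℝ} (hν : ∀ i j, 0 ≤ ν i j)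
    (hstat : IsStat2 ν) :
    ∑ i, ∑ j, ν i j * log (marg ν i * bMat μ u i j / μ i j)
      = DKL1 (marg ν) (marg μ) + gfun μ (marg ν) u := by
  have hpoint : ∀ i j, ν i j * log (marg ν i * bMat μ u i j / μ i j)
      = ν i j * (log (marg ν i / marg μ i) + log (u i / ∑ k, aMat μ i k * u k))
        + (ν i j * log (u j) - ν i j * log (u i)) := by
    intro i j
    obtain h | h := eq_or_ne (ν i j) 0
    · simp [h]
    rw [log_mul_bMat_div hμ hu (marg_pos_of_ne_zero hν h)]
    ring
  calc ∑ i, ∑ j, ν i j * log (marg ν i * bMat μ u i j / μ i j)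
      = ∑ i, ∑ j, ν i j * (log (marg ν i / marg μ i) + log (u i / ∑ k, aMat μ i k * u k))
        + (∑ i, ∑ j, ν i j * log (u j) - ∑ i, ∑ j, ν i j * log (u i)) := by
        simp only [hpoint, sum_add_distrib, sum_sub_distrib]
    _ = ∑ i, marg ν i * (log (marg ν i / marg μ i) + log (u i / ∑ k, aMat μ i k * u k)) := by
        rw [← hstat.sum_sum_mul_left_eq fun i => log (u i), sub_self, add_zero]
        simp only [← sum_mul, marg]
    _ = DKL1 (marg ν) (marg μ) + gfun μ (marg ν) u := by
        simp only [DKL1, gfun, mul_add, sum_add_distrib]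

lemma Dc_eq_Dc_mul_bMat_add_gfun {ν : Fin n → Fin n → ℝ} (hν : ∀ i j, 0 ≤ ν i j)
    (hstat : IsStat2 ν) :
    Dc ν μ = Dc ν (fun i j => marg ν i * bMat μ u i j) + gfun μ (marg ν) u := by
  have hsupp (i j : Fin n) (h : ν i j ≠ 0) : marg ν i * bMat μ u i j ≠ 0 :=
    (mul_pos (marg_pos_of_ne_zero hν h) (bMat_pos hμ hu i j)).ne'
  rw [Dc, DKL2_eq_DKL2_add hsupp fun i j => (hμ i j).ne',
    sum_sum_mul_log_mul_bMat_div hμ hu hν hstat, Dc, marg_mul_bMat hμ hu, DKL1_self]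
  ring

end bMat

end

theorem stmt19_general {n : ℕ} (μ : Fin n → Fin n → ℝ)
    (hpos : ∀ i j, 0 < μ i j)
    (φ : Fin n → ℝ)
    (ustar : Fin n → ℝ) (hupos : ∀ i, 0 < ustar i) :
    (∀ ν : Fin n → Fin n → ℝ, IsStat2 ν → ∀ c : Fin n → ℝ,
      ∑ i, ∑ j, ν i j * c i = ∑ i, ∑ j, ν i j * c j) ∧
    (∀ ν ∈ Ms2 n, marg ν = φ →
      Dc ν μ = Dc ν (fun i j => φ i * bMat μ ustar i j) + gfun μ φ ustar ∧
      gfun μ φ ustar ≤ Dc ν μ) := by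
  refine ⟨fun ν hν c => hν.sum_sum_mul_left_eq c, ?_⟩
  rintro ν ⟨⟨hν, -⟩, hstat⟩ rfl
  have key := Dc_eq_Dc_mul_bMat_add_gfun hpos hupos hν hstat
  refine ⟨key, ?_⟩
  rw [key, le_add_iff_nonneg_left]
  refine Dc_nonneg_of_marg_eq hν (fun i j => ?_) (fun i j h => ?_)
    (marg_mul_bMat hpos hupos _).symm
  · exact mul_nonneg (sum_nonneg fun k _ => hν i k) (bMat_pos hpos hupos i j).le
  · exact mul_pos (marg_pos_of_ne_zero hν h) (bMat_pos hpos hupos i j)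

/-- (i) For every stationary `ν` on `A²` and all constants
`c₁,...,c_n`, `Σ_{ij} ν_{ij} c_i = Σ_{ij} ν_{ij} c_j`.  (ii) If `μ ∈ M_s(A²)` is
strictly positive with transition matrix `a_{ij} = μ_{ij}/μ̄_i`, `u* > 0` maximizes
`g(u) = Σ_i φ_i log(u_i/(Au)_i)` over the positive orthant, `b_{ij} = a_{ij}u*_j/(Au*)_i`
and `ν*_{ij} = φ_i b_{ij}`, then every `ν ∈ M_s(A²)` with `ν̄ = φ` satisfies
`D_c(ν‖μ) = D_c(ν‖ν*) + g(u*)`, and hence `D_c(ν‖μ) ≥ g(u*)`. -/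
theorem stmt19 {n : ℕ} (μ : Fin n → Fin n → ℝ)
    (hμ : μ ∈ Ms2 n) (hpos : ∀ i j, 0 < μ i j)
    (φ : Fin n → ℝ) (hφ : (∀ i, 0 ≤ φ i) ∧ ∑ i, φ i = 1)
    (ustar : Fin n → ℝ) (hupos : ∀ i, 0 < ustar i)
    (hmax : ∀ u : Fin n → ℝ, (∀ i, 0 < u i) → gfun μ φ u ≤ gfun μ φ ustar) :
    (∀ ν : Fin n → Fin n → ℝ, IsStat2 ν → ∀ c : Fin n → ℝ,
      ∑ i, ∑ j, ν i j * c i = ∑ i, ∑ j, ν i j * c j) ∧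
    (∀ ν ∈ Ms2 n, marg ν = φ →
      Dc ν μ = Dc ν (fun i j => φ i * bMat μ ustar i j) + gfun μ φ ustar ∧
      gfun μ φ ustar ≤ Dc ν μ) :=
  stmt19_general μ hpos φ ustar hupos
end
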